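/- arXiv:1912.01448 — 4 statements merged into one kernel-verified Lean document; each statement's English description precedes it below -/
import Mathlib

section
/- Setting (finite-path exponential parametrization): Let S be a finite type of states and, for each i : S, let A i be a finite type of actions with a distinguished element ω i : A i (the dependent action). Given independent action preferences a, namely a real number a i j for each i : S and each j : A i with j ≠ ω i, with Σ_{j ≠ ω i} exp(a i j) < 1 at each state i, define the completed preferences â by â i (ω i) := log(1 − Σ_{j ≠ ω i} exp(a i j)) and â i j := a i j for j ≠ ω i. Fix counters n i j : ℕ for each i : S and j : A i, and a constant c > 0, and define q(a) := c · exp(Σ_{i : S} Σ_{j : A i} â i j · n i j). Then, at any admissible a, for each i : S and j ≠ ω i, the partial derivative of q with respect to the coordinate a i j equals q(a) · (n i j − exp(â i j − â i (ω i)) · n i (ω i)). -/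
/-!
Only the dependent preference `â i (ω i) = log (1 - ∑_{k ≠ ω i} exp (a i k))` reacts to `a i j`
besides `a i j` itself, and its derivative is `-exp (a i j) / (1 - ∑_{k ≠ ω i} exp (a i k))
= -exp (â i j - â i (ω i))`. So the exponent `∑ â i k * n i k` has directional derivative
`∑_i ∑_{k ≠ ω i} e i k * (n i k - exp (â i k - â i (ω i)) * n i (ω i))` along any `e`;
the chain rule through `c * exp` contributes the factor `q a`, and the coordinate direction
`e = Pi.single i (Pi.single j 1)` picks out one summand.
-/

open Finset

theorem hasDerivAt_sum_exp_add_mul {α : Type*} (s : Finset α) (x e : α → ℝ) :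
    HasDerivAt (fun t => ∑ k ∈ s, Real.exp (x k + t * e k)) (∑ k ∈ s, Real.exp (x k) * e k) 0 :=
  HasDerivAt.fun_sum fun k _ => by
    simpa using (((hasDerivAt_id (0 : ℝ)).mul_const (e k)).const_add (x k)).exp

section Completion

variable {α : Type*} [Fintype α] [DecidableEq α]

noncomputable def completePrefs (ω : α) (x : α → ℝ) (k : α) : ℝ :=
  if k = ω then Real.log (1 - ∑ k' ∈ univ.erase ω, Real.exp (x k')) else x k

theorem completePrefs_self (ω : α) (x : α → ℝ) :
    completePrefs ω x ω = Real.log (1 - ∑ k ∈ univ.erase ω, Real.exp (x k)) :=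
  if_pos rfl

theorem completePrefs_of_ne {ω k : α} (x : α → ℝ) (hk : k ≠ ω) : completePrefs ω x k = x k :=
  if_neg hk

theorem exp_completePrefs_self {ω : α} {x : α → ℝ} (hx : ∑ k ∈ univ.erase ω, Real.exp (x k) < 1) :
    Real.exp (completePrefs ω x ω) = 1 - ∑ k ∈ univ.erase ω, Real.exp (x k) := by
  rw [completePrefs_self, Real.exp_log (sub_pos.mpr hx)]

theorem hasDerivAt_completePrefs_self {ω : α} {x : α → ℝ}
    (hx : ∑ k ∈ univ.erase ω, Real.exp (x k) ≠ 1) (e : α → ℝ) :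
    HasDerivAt (fun t : ℝ => completePrefs ω (x + t • e) ω)
      (-(∑ k ∈ univ.erase ω, Real.exp (x k) * e k) / (1 - ∑ k ∈ univ.erase ω, Real.exp (x k))) 0 := by
  simp only [completePrefs_self, Pi.add_apply, Pi.smul_apply, smul_eq_mul]
  have := ((hasDerivAt_sum_exp_add_mul (univ.erase ω) x e).const_sub 1).log
    (by simpa only [zero_mul, add_zero, sub_ne_zero] using hx.symm)
  simpa only [zero_mul, add_zero, neg_div] using this

theorem hasDerivAt_completePrefs_of_ne {ω k : α} (x e : α → ℝ) (hk : k ≠ ω) :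
    HasDerivAt (fun t : ℝ => completePrefs ω (x + t • e) k) (e k) 0 := by
  simp only [completePrefs_of_ne _ hk, Pi.add_apply, Pi.smul_apply, smul_eq_mul]
  simpa using ((hasDerivAt_id (0 : ℝ)).mul_const (e k)).const_add (x k)

theorem hasDerivAt_sum_completePrefs_mul {ω : α} {x : α → ℝ}
    (hx : ∑ k ∈ univ.erase ω, Real.exp (x k) < 1) (e m : α → ℝ) :
    HasDerivAt (fun t : ℝ => ∑ k, completePrefs ω (x + t • e) k * m k)
      (∑ k ∈ univ.erase ω,
        e k * (m k - Real.exp (completePrefs ω x k - completePrefs ω x ω) * m ω)) 0 := by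
  simp only [← add_sum_erase _ _ (mem_univ ω)]
  refine (((hasDerivAt_completePrefs_self hx.ne e).mul_const (m ω)).add
    (HasDerivAt.fun_sum fun k hk =>
      (hasDerivAt_completePrefs_of_ne x e (ne_of_mem_erase hk)).mul_const (m k))).congr_deriv ?_
  rw [← exp_completePrefs_self hx]
  have hterm : ∀ k ∈ univ.erase ω,
      e k * (m k - Real.exp (completePrefs ω x k - completePrefs ω x ω) * m ω)
        = e k * m k - Real.exp (x k) * e k / Real.exp (completePrefs ω x ω) * m ω := by
    intro k hk
    rw [completePrefs_of_ne _ (ne_of_mem_erase hk), Real.exp_sub]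
    ring
  rw [sum_congr rfl hterm, sum_sub_distrib, ← sum_mul, ← sum_div]
  ring

end Completion

section SingleSingle

variable {ι : Type*} [DecidableEq ι] {β : ι → Type*} [∀ i, DecidableEq (β i)]
  {R : Type*} [Semiring R]

theorem add_sigma_ite_eq_add_smul_single_single (x : ∀ i, β i → R) (i : ι) (j : β i) (t : R) :
    (fun i' j' => x i' j' + if (⟨i', j'⟩ : Σ s, β s) = ⟨i, j⟩ then t else 0)
      = x + t • Pi.single (M := fun i => β i → R) i (Pi.single j 1) := by
  funext i' j'
  rw [Pi.add_apply, Pi.add_apply, ← Pi.single_smul, ← Pi.single_smul', smul_eq_mul, mul_one,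
    ← Sigma.curry_single (γ := fun _ _ => R) (⟨i, j⟩ : Σ s, β s), ← Pi.single_apply]
  rfl

theorem sum_sum_single_single_mul [Fintype ι] {s : ∀ i, Finset (β i)} {i : ι} {j : β i}
    (hj : j ∈ s i) (f : ∀ i, β i → R) :
    ∑ i', ∑ j' ∈ s i', Pi.single (M := fun i => β i → R) i (Pi.single j 1) i' j' * f i' j'
      = f i j := by
  rw [Fintype.sum_eq_single i fun i' hi' => by simp [Pi.single_eq_of_ne hi'],
    sum_eq_single_of_mem j hj fun j' _ hj' => by simp [hj']]
  simp

end SingleSingle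

theorem stmt_1_general {S : Type*} [Fintype S] [DecidableEq S]
    {A : S → Type*} [∀ i, Fintype (A i)] [∀ i, DecidableEq (A i)]
    (ω : ∀ i, A i)
    (hat : (∀ i, A i → ℝ) → (∀ i, A i → ℝ))
    (hhat : ∀ (a : ∀ i, A i → ℝ) (i : S) (j : A i),
      hat a i j = if j = ω i
        then Real.log (1 - ∑ j' ∈ univ.filter (fun j' => j' ≠ ω i), Real.exp (a i j'))
        else a i j)
    (n : ∀ i, A i → ℕ) (c : ℝ)
    (q : (∀ i, A i → ℝ) → ℝ)
    (hq : ∀ a : ∀ i, A i → ℝ,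
      q a = c * Real.exp (∑ i, ∑ j, hat a i j * (n i j : ℝ)))
    (a : ∀ i, A i → ℝ)
    (ha : ∀ i, ∑ j' ∈ univ.filter (fun j' => j' ≠ ω i), Real.exp (a i j') < 1)
    (i : S) (j : A i) (hj : j ≠ ω i) :
    HasDerivAt
      (fun t : ℝ => q (fun i' j' =>
        a i' j' + if (⟨i', j'⟩ : Σ s, A s) = ⟨i, j⟩ then t else 0))
      (q a * ((n i j : ℝ) -
        Real.exp (hat a i j - hat a i (ω i)) * (n i (ω i) : ℝ))) 0 := by
  simp only [filter_ne'] at hhat ha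
  obtain rfl : hat = fun b i => completePrefs (ω i) (b i) := by
    funext b i j
    exact hhat b i j
  have hexponent := HasDerivAt.fun_sum (u := univ) fun i' _ =>
    hasDerivAt_sum_completePrefs_mul (ha i')
      (Pi.single (M := fun i => A i → ℝ) i (Pi.single j 1) i') fun j' => (n i' j' : ℝ)
  rw [sum_sum_single_single_mul (s := fun i' => univ.erase (ω i'))
    (mem_erase.2 ⟨hj, mem_univ j⟩)] at hexponent
  simp only [add_sigma_ite_eq_add_smul_single_single, hq]
  refine (hexponent.exp.const_mul c).congr_deriv ?_
  simp only [zero_smul, add_zero, mul_assoc]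

open Finset in
/-- Proposition 1 of the paper: the partial derivative of the path probability
`q a = c * exp (∑ i j, â i j * n i j)` with respect to an independent action
preference `a i j` (for `j ≠ ω i`) equals
`q a * (n i j - exp (â i j - â i (ω i)) * n i (ω i))`, where `â` is the completion
of the independent action preferences by the dependent one
`â i (ω i) = log (1 - ∑_{j ≠ ω i} exp (a i j))`. -/
theorem stmt_1 {S : Type*} [Fintype S] [DecidableEq S]
    {A : S → Type*} [∀ i, Fintype (A i)] [∀ i, DecidableEq (A i)]
    (ω : ∀ i, A i)
    (hat : (∀ i, A i → ℝ) → (∀ i, A i → ℝ))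
    (hhat : ∀ (a : ∀ i, A i → ℝ) (i : S) (j : A i),
      hat a i j = if j = ω i
        then Real.log (1 - ∑ j' ∈ univ.filter (fun j' => j' ≠ ω i), Real.exp (a i j'))
        else a i j)
    (n : ∀ i, A i → ℕ) (c : ℝ) (hc : 0 < c)
    (q : (∀ i, A i → ℝ) → ℝ)
    (hq : ∀ a : ∀ i, A i → ℝ,
      q a = c * Real.exp (∑ i, ∑ j, hat a i j * (n i j : ℝ)))
    (a : ∀ i, A i → ℝ)
    (ha : ∀ i, ∑ j' ∈ univ.filter (fun j' => j' ≠ ω i), Real.exp (a i j') < 1)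
    (i : S) (j : A i) (hj : j ≠ ω i) :
    HasDerivAt
      (fun t : ℝ => q (fun i' j' =>
        a i' j' + if (⟨i', j'⟩ : Σ s, A s) = ⟨i, j⟩ then t else 0))
      (q a * ((n i j : ℝ) -
        Real.exp (hat a i j - hat a i (ω i)) * (n i (ω i) : ℝ))) 0 :=
  stmt_1_general ω hat hhat n c q hq a ha i j hj
end

section
/- Setting (finite-path exponential parametrization): Let S be a finite type of states and, for each i : S, let A i be a finite type of actions with a distinguished element ω i : A i (the dependent action). Given independent action preferences a, namely a real number a i j for each i : S and each j : A i with j ≠ ω i, with Σ_{j ≠ ω i} exp(a i j) < 1 at each state i, define the completed preferences â by â i (ω i) := log(1 − Σ_{j ≠ ω i} exp(a i j)) and â i j := a i j for j ≠ ω i. Let T be a finite type of paths; for each τ : T let n τ i j : ℕ be the number of occurrences of state-action (i,j) in τ and c τ > 0 a fixed positive real, and set q(a, τ) := c τ · exp(Σ_{i : S} Σ_{j : A i} â i j · n τ i j). Fix rewards R k l : ℝ for each k : S, l : A k, set V(τ) := Σ_{k,l} n τ k l · R k l and J(a) := Σ_{τ : T} q(a, τ) · V(τ), and define the counter correlations C_{i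 j, k l}(a) := Σ_{τ : T} q(a, τ) · n τ i j · n τ k l. Then for every admissible a, every i : S and every j ≠ ω i, the partial derivative of J with respect to the coordinate a i j equals Σ_{k : S} Σ_{l : A k} [ C_{i j, k l}(a) − exp(â i j − â i (ω i)) · C_{i (ω i), k l}(a) ] · R k l. -/
/-!
Moving the independent preference `a i j` by `t` moves `â i j` at speed `1` and the dependent
preference `â i (ω i) = log (1 - ∑_{j' ≠ ω i} exp (a i j'))` at speed
`-exp (a i j) / (1 - ∑_{j' ≠ ω i} exp (a i j')) = -exp (â i j - â i (ω i))`, and fixes every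
other `â`. So the log-weight `∑ â * n τ` of a path moves at speed
`n τ i j - exp (â i j - â i (ω i)) * n τ i (ω i)`; differentiating
`J = ∑ τ, c τ exp (∑ â * n τ) V τ` and expanding `V τ = ∑ n τ k l R k l` turns the sum over
paths into counter correlations.
-/

open Finset Real

theorem hasDerivAt_add_ite (x t₀ : ℝ) (p : Prop) [Decidable p] :
    HasDerivAt (fun t : ℝ => x + if p then t else 0) (if p then 1 else 0) t₀ := by
  split_ifs
  · exact (hasDerivAt_id t₀).const_add x
  · simpa using hasDerivAt_const t₀ (x + 0)

theorem hasDerivAt_log_one_sub_sum_exp {ι : Type*} [DecidableEq ι] {s : Finset ι}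
    {b : ι → ℝ} {j : ι} (hj : j ∈ s) (hb : ∑ j' ∈ s, exp (b j') < 1) :
    HasDerivAt (fun t => log (1 - ∑ j' ∈ s, exp (b j' + if j' = j then t else 0)))
      (-(exp (b j) / (1 - ∑ j' ∈ s, exp (b j')))) 0 := by
  have hsum : HasDerivAt (fun t => ∑ j' ∈ s, exp (b j' + if j' = j then t else 0))
      (exp (b j)) 0 := by
    refine (HasDerivAt.fun_sum fun j' _ =>
      (hasDerivAt_add_ite (b j') 0 (j' = j)).exp).congr_deriv ?_
    simp [hj]
  convert (hsum.const_sub 1).log (by simpa using (sub_pos.2 hb).ne') using 1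
  simp [neg_div]

theorem sum_mul_sub_mul_mul_sum_sum {S T : Type*} [Fintype S] [Fintype T]
    {A : S → Type*} [∀ k, Fintype (A k)] (w x y : T → ℝ) (K : ℝ) (N : T → ∀ k, A k → ℝ)
    (R : ∀ k, A k → ℝ) :
    ∑ τ, w τ * (x τ - K * y τ) * ∑ k, ∑ l, N τ k l * R k l =
      ∑ k, ∑ l, (∑ τ, w τ * x τ * N τ k l - K * ∑ τ, w τ * y τ * N τ k l) * R k l := by
  simp only [mul_sum, sum_mul, ← sum_sub_distrib]
  rw [sum_comm]
  refine sum_congr rfl fun k _ => ?_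
  rw [sum_comm]
  exact sum_congr rfl fun l _ => sum_congr rfl fun τ _ => by ring

section

variable {S : Type*} {A : S → Type*} [∀ i, DecidableEq (A i)]

section Completion

variable [∀ i, Fintype (A i)]

noncomputable def completedPref (ω : ∀ i, A i) (a : ∀ i, A i → ℝ) : ∀ i, A i → ℝ :=
  fun i j => if j = ω i then log (1 - ∑ j' ∈ univ.filter (fun j' => j' ≠ ω i), exp (a i j'))
    else a i j

theorem exp_completedPref_sub {ω : ∀ i, A i} {a : ∀ i, A i → ℝ} {i : S} {j : A i}
    (hj : j ≠ ω i) (ha : ∑ j' ∈ univ.filter (fun j' => j' ≠ ω i), exp (a i j') < 1) :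
    exp (completedPref ω a i j - completedPref ω a i (ω i)) =
      exp (a i j) / (1 - ∑ j' ∈ univ.filter (fun j' => j' ≠ ω i), exp (a i j')) := by
  rw [completedPref, completedPref, if_neg hj, if_pos rfl, exp_sub, exp_log (sub_pos.2 ha)]

end Completion

variable [DecidableEq S]

def perturbPref (a : ∀ i, A i → ℝ) (i : S) (j : A i) (t : ℝ) : ∀ i, A i → ℝ :=
  fun i' j' => a i' j' + if (⟨i', j'⟩ : Σ s, A s) = ⟨i, j⟩ then t else 0

theorem perturbPref_zero (a : ∀ i, A i → ℝ) (i : S) (j : A i) : perturbPref a i j 0 = a := by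
  funext i' j'
  simp [perturbPref]

theorem perturbPref_of_ne (a : ∀ i, A i → ℝ) {i i' : S} (j : A i) (t : ℝ) (h : i' ≠ i) :
    perturbPref a i j t i' = a i' := by
  funext j'
  simp [perturbPref, h]

theorem perturbPref_self (a : ∀ i, A i → ℝ) (i : S) (j : A i) (t : ℝ) (j' : A i) :
    perturbPref a i j t i j' = a i j' + if j' = j then t else 0 := by
  simp [perturbPref]

variable [∀ i, Fintype (A i)]

theorem hasDerivAt_completedPref_perturbPref {ω : ∀ i, A i} {a : ∀ i, A i → ℝ} {i : S}
    {j : A i} (hj : j ≠ ω i) (ha : ∑ j' ∈ univ.filter (fun j' => j' ≠ ω i), exp (a i j') < 1)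
    (i' : S) (j' : A i') :
    HasDerivAt (fun t => completedPref ω (perturbPref a i j t) i' j')
      ((if (⟨i', j'⟩ : Σ s, A s) = ⟨i, j⟩ then 1 else 0) -
        exp (completedPref ω a i j - completedPref ω a i (ω i)) *
          if (⟨i', j'⟩ : Σ s, A s) = ⟨i, ω i⟩ then 1 else 0) 0 := by
  by_cases hi : i' = i
  swap
  · have hconst : ∀ t, completedPref ω (perturbPref a i j t) i' j' =
        completedPref ω a i' j' := by
      simp [completedPref, perturbPref_of_ne _ _ _ hi]
    simpa [hconst, hi] using hasDerivAt_const (0 : ℝ) (completedPref ω a i' j')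
  subst hi
  by_cases hω : j' = ω i'
  · subst hω
    rw [exp_completedPref_sub hj ha]
    simpa [completedPref, perturbPref_self, Ne.symm hj] using
      hasDerivAt_log_one_sub_sum_exp (j := j) (by simpa using hj) ha
  · simpa [completedPref, perturbPref_self, hω] using hasDerivAt_add_ite (a i' j') 0 (j' = j)

theorem hasDerivAt_sum_completedPref_perturbPref_mul [Fintype S] {ω : ∀ i, A i}
    {a : ∀ i, A i → ℝ} {i : S} {j : A i} (hj : j ≠ ω i)
    (ha : ∑ j' ∈ univ.filter (fun j' => j' ≠ ω i), exp (a i j') < 1) (m : ∀ i, A i → ℝ) :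
    HasDerivAt (fun t => ∑ i', ∑ j', completedPref ω (perturbPref a i j t) i' j' * m i' j')
      (m i j - exp (completedPref ω a i j - completedPref ω a i (ω i)) * m i (ω i)) 0 := by
  refine (HasDerivAt.fun_sum fun i' _ => HasDerivAt.fun_sum fun j' _ =>
    (hasDerivAt_completedPref_perturbPref hj ha i' j').mul_const (m i' j')).congr_deriv ?_
  set E := exp (completedPref ω a i j - completedPref ω a i (ω i))
  rw [← Fintype.sum_sigma fun x : Σ s, A s =>
    ((if x = ⟨i, j⟩ then 1 else 0) - E * if x = ⟨i, ω i⟩ then 1 else 0) * m x.1 x.2]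
  simp [sub_mul, sum_sub_distrib, ite_mul]

end

open Finset in
theorem stmt_3_general {S : Type*} [Fintype S] [DecidableEq S]
    {A : S → Type*} [∀ i, Fintype (A i)] [∀ i, DecidableEq (A i)]
    (ω : ∀ i, A i)
    (hat : (∀ i, A i → ℝ) → (∀ i, A i → ℝ))
    (hhat : ∀ (a : ∀ i, A i → ℝ) (i : S) (j : A i),
      hat a i j = if j = ω i
        then Real.log (1 - ∑ j' ∈ univ.filter (fun j' => j' ≠ ω i), Real.exp (a i j'))
        else a i j)
    {T : Type*} [Fintype T]
    (n : T → ∀ i, A i → ℕ) (c : T → ℝ)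
    (q : (∀ i, A i → ℝ) → T → ℝ)
    (hq : ∀ (a : ∀ i, A i → ℝ) (τ : T),
      q a τ = c τ * Real.exp (∑ i, ∑ j, hat a i j * (n τ i j : ℝ)))
    (R : ∀ k, A k → ℝ)
    (V : T → ℝ)
    (hV : ∀ τ, V τ = ∑ k, ∑ l, (n τ k l : ℝ) * R k l)
    (J : (∀ i, A i → ℝ) → ℝ)
    (hJ : ∀ a, J a = ∑ τ : T, q a τ * V τ)
    (C : (∀ i, A i → ℝ) → ∀ i, A i → ∀ k, A k → ℝ)
    (hC : ∀ (a : ∀ i, A i → ℝ) (i : S) (j : A i) (k : S) (l : A k),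
      C a i j k l = ∑ τ : T, q a τ * (n τ i j : ℝ) * (n τ k l : ℝ))
    (a : ∀ i, A i → ℝ)
    (ha : ∀ i, ∑ j' ∈ univ.filter (fun j' => j' ≠ ω i), Real.exp (a i j') < 1)
    (i : S) (j : A i) (hj : j ≠ ω i) :
    HasDerivAt
      (fun t : ℝ => J (fun i' j' =>
        a i' j' + if (⟨i', j'⟩ : Σ s, A s) = ⟨i, j⟩ then t else 0))
      (∑ k, ∑ l,
        (C a i j k l - Real.exp (hat a i j - hat a i (ω i)) * C a i (ω i) k l) * R k l)
      0 := by
  obtain rfl : hat = completedPref ω :=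
    funext fun a => funext fun i => funext fun j => hhat a i j
  set E := exp (completedPref ω a i j - completedPref ω a i (ω i))
  have hterm : ∀ τ, HasDerivAt (fun t => q (perturbPref a i j t) τ * V τ)
      (q a τ * (n τ i j - E * n τ i (ω i)) * V τ) 0 := fun τ => by
    have h := ((hasDerivAt_sum_completedPref_perturbPref_mul hj (ha i)
      fun i' j' => (n τ i' j' : ℝ)).exp.const_mul (c τ)).mul_const (V τ)
    rw [perturbPref_zero] at h
    simp only [hq]
    exact h.congr_deriv (by ring)
  simp only [hJ]
  refine (HasDerivAt.fun_sum fun τ _ => hterm τ).congr_deriv ?_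
  simp only [hV, sum_mul_sub_mul_mul_sum_sum, hC]

open Finset in
/-- Theorem 1 of the paper (model-based policy path gradient): for finitely many paths
with probabilities `q a τ = c τ * exp (∑ i j, â i j * n τ i j)`, rewards
`V τ = ∑ k l, n τ k l * R k l`, objective `J a = ∑ τ, q a τ * V τ`, and counter
correlations `C a i j k l = ∑ τ, q a τ * n τ i j * n τ k l`, the partial derivative of
`J` with respect to the independent action preference `a i j` equals
`∑ k l, (C a i j k l - exp (â i j - â i (ω i)) * C a i (ω i) k l) * R k l`. -/
theorem stmt_3 {S : Type*} [Fintype S] [DecidableEq S]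
    {A : S → Type*} [∀ i, Fintype (A i)] [∀ i, DecidableEq (A i)]
    (ω : ∀ i, A i)
    (hat : (∀ i, A i → ℝ) → (∀ i, A i → ℝ))
    (hhat : ∀ (a : ∀ i, A i → ℝ) (i : S) (j : A i),
      hat a i j = if j = ω i
        then Real.log (1 - ∑ j' ∈ univ.filter (fun j' => j' ≠ ω i), Real.exp (a i j'))
        else a i j)
    {T : Type*} [Fintype T]
    (n : T → ∀ i, A i → ℕ) (c : T → ℝ) (hc : ∀ τ, 0 < c τ)
    (q : (∀ i, A i → ℝ) → T → ℝ)
    (hq : ∀ (a : ∀ i, A i → ℝ) (τ : T),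
      q a τ = c τ * Real.exp (∑ i, ∑ j, hat a i j * (n τ i j : ℝ)))
    (R : ∀ k, A k → ℝ)
    (V : T → ℝ)
    (hV : ∀ τ, V τ = ∑ k, ∑ l, (n τ k l : ℝ) * R k l)
    (J : (∀ i, A i → ℝ) → ℝ)
    (hJ : ∀ a, J a = ∑ τ : T, q a τ * V τ)
    (C : (∀ i, A i → ℝ) → ∀ i, A i → ∀ k, A k → ℝ)
    (hC : ∀ (a : ∀ i, A i → ℝ) (i : S) (j : A i) (k : S) (l : A k),
      C a i j k l = ∑ τ : T, q a τ * (n τ i j : ℝ) * (n τ k l : ℝ))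
    (a : ∀ i, A i → ℝ)
    (ha : ∀ i, ∑ j' ∈ univ.filter (fun j' => j' ≠ ω i), Real.exp (a i j') < 1)
    (i : S) (j : A i) (hj : j ≠ ω i) :
    HasDerivAt
      (fun t : ℝ => J (fun i' j' =>
        a i' j' + if (⟨i', j'⟩ : Σ s, A s) = ⟨i, j⟩ then t else 0))
      (∑ k, ∑ l,
        (C a i j k l - Real.exp (hat a i j - hat a i (ω i)) * C a i (ω i) k l) * R k l)
      0 :=
  stmt_3_general ω hat hhat n c q hq R V hV J hJ C hC a ha i j hj
end

section
/- Let ι be a finite type with a distinguished element 0 : ι, let M : Matrix ι ι ℝ have nonnegative entries with every row sum at most λ for some 0 ≤ λ < 1, and let D := (1 − M)⁻¹ = Σ_{t=0}^∞ M^t. Fix i, k : ι and define g : ℕ × ℕ → ℝ by g(t, t') := (M^t)_{0 i} · (M^{t'−t})_{i k} if t ≤ t', and g(t, t') := (M^{t'})_{0 k} · (M^{t−t'})_{k i} if t' < t. Then g is summable over ℕ × ℕ and Σ_{(t,t') : ℕ × ℕ} g(t, t') = D_{0 i} · D_{i k} + D_{0 k} · D_{k i} − D_{0 i} · (if i = k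 then 1 else 0). -/
/-!
Split the pairs `(t, t')` into the region `t ≤ t'`, parametrised by `(t, t + s)`, and the region
`t' < t`, parametrised by `(t' + s + 1, t')`. On each region `g` is a product of an entry of
`M ^ t` and an entry of `M ^ s` with independent indices, so its sum factors into entries of
`D = ∑ M ^ t` (Cauchy product of nonnegative series). The second region misses `s = 0`, which
removes the term `D o k * (M ^ 0) k i = D o i * δ_{ik}`. Summability comes from entries of `M ^ t`
being bounded by `λ ^ t`.
-/

open Finset

namespace Matrix

variable {ι α : Type*} [Fintype ι] [DecidableEq ι] [Semiring α] [PartialOrder α] [IsOrderedRing α]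
  {M : Matrix ι ι α} {lam : α}

theorem sum_pow_apply_le (hM : ∀ i j, 0 ≤ M i j) (hlam : 0 ≤ lam) (hrow : ∀ i, ∑ j, M i j ≤ lam)
    (t : ℕ) (i : ι) : ∑ j, (M ^ t) i j ≤ lam ^ t := by
  induction t generalizing i with
  | zero => simp [one_apply]
  | succ n ih =>
    calc ∑ j, (M ^ (n + 1)) i j = ∑ l, (M ^ n) i l * ∑ j, M l j := by
          simp only [pow_succ, mul_apply, mul_sum]
          exact sum_comm
      _ ≤ ∑ l, (M ^ n) i l * lam :=
          sum_le_sum fun l _ => mul_le_mul_of_nonneg_left (hrow l) (pow_apply_nonneg hM n i l)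
      _ = (∑ l, (M ^ n) i l) * lam := (sum_mul ..).symm
      _ ≤ lam ^ (n + 1) := by
          rw [pow_succ]
          exact mul_le_mul_of_nonneg_right (ih i) hlam

theorem pow_apply_le (hM : ∀ i j, 0 ≤ M i j) (hlam : 0 ≤ lam) (hrow : ∀ i, ∑ j, M i j ≤ lam)
    (t : ℕ) (i j : ι) : (M ^ t) i j ≤ lam ^ t :=
  (single_le_sum (fun l _ => pow_apply_nonneg hM t i l) (mem_univ j)).trans
    (sum_pow_apply_le hM hlam hrow t i)

theorem summable_pow_apply {M : Matrix ι ι ℝ} (hM : ∀ i j, 0 ≤ M i j) {lam : ℝ}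
    (hlam0 : 0 ≤ lam) (hlam1 : lam < 1) (hrow : ∀ i, ∑ j, M i j ≤ lam) (i j : ι) :
    Summable fun t => (M ^ t) i j :=
  .of_nonneg_of_le (fun t => pow_apply_nonneg hM t i j) (fun t => pow_apply_le hM hlam0 hrow t i j)
    (summable_geometric_of_lt_one hlam0 hlam1)

theorem tsum_apply {β m n R : Type*} [AddCommMonoid R] [TopologicalSpace R] [T2Space R]
    {f : β → Matrix m n R} (hf : ∀ i j, Summable fun b => f b i j) (i : m) (j : n) :
    (∑' b, f b) i j = ∑' b, f b i j :=
  (congrFun (_root_.tsum_apply (Pi.summable.2 fun i => Pi.summable.2 (hf i))) j).trans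
    (_root_.tsum_apply (Pi.summable.2 (hf i)))

end Matrix

theorem HasSum.mul_of_nonneg {β γ : Type*} {f : β → ℝ} {g : γ → ℝ} {a b : ℝ} (hf : HasSum f a)
    (hg : HasSum g b) (hf0 : 0 ≤ f) (hg0 : 0 ≤ g) :
    HasSum (fun p : β × γ => f p.1 * g p.2) (a * b) :=
  hf.mul hg (hf.summable.mul_of_nonneg hg.summable hf0 hg0)

theorem Set.range_nat_prod_upper :
    Set.range (fun p : ℕ × ℕ => (p.1, p.1 + p.2)) = {p | p.1 ≤ p.2} := by
  ext ⟨t, t'⟩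
  refine ⟨?_, fun h => ⟨(t, t' - t), ?_⟩⟩
  · rintro ⟨⟨a, b⟩, h⟩
    simp only [Prod.mk.injEq] at h
    simp only [Set.mem_ofPred_eq]
    omega
  · simp only [Set.mem_ofPred_eq] at h
    exact Prod.ext rfl (by dsimp only; omega)

theorem Set.range_nat_prod_lower :
    Set.range (fun p : ℕ × ℕ => (p.1 + p.2 + 1, p.1)) = {p | p.1 ≤ p.2}ᶜ := by
  ext ⟨t, t'⟩
  refine ⟨?_, fun h => ⟨(t', t - t' - 1), ?_⟩⟩
  · rintro ⟨⟨a, b⟩, h⟩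
    simp only [Prod.mk.injEq] at h
    simp only [Set.mem_compl_iff, Set.mem_ofPred_eq]
    omega
  · simp only [Set.mem_compl_iff, Set.mem_ofPred_eq] at h
    exact Prod.ext (by dsimp only; omega) rfl

theorem HasSum.of_upper_of_lower {α : Type*} [AddCommMonoid α] [TopologicalSpace α]
    [ContinuousAdd α] {f : ℕ × ℕ → α} {a b : α}
    (hupper : HasSum (fun p : ℕ × ℕ => f (p.1, p.1 + p.2)) a)
    (hlower : HasSum (fun p : ℕ × ℕ => f (p.1 + p.2 + 1, p.1)) b) : HasSum f (a + b) := by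
  have hu : (fun p : ℕ × ℕ => (p.1, p.1 + p.2)).Injective := by
    rintro ⟨a, b⟩ ⟨c, d⟩ h
    simp only [Prod.mk.injEq] at h ⊢
    omega
  have hl : (fun p : ℕ × ℕ => (p.1 + p.2 + 1, p.1)).Injective := by
    rintro ⟨a, b⟩ ⟨c, d⟩ h
    simp only [Prod.mk.injEq] at h ⊢
    omega
  refine HasSum.add_isCompl (s := Set.range _) (t := Set.range _) ?_
    (hu.hasSum_range_iff.2 hupper) (hl.hasSum_range_iff.2 hlower)
  rw [Set.range_nat_prod_upper, Set.range_nat_prod_lower]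
  exact isCompl_compl

theorem stmt_8_general {ι : Type*} [Fintype ι] [DecidableEq ι]
    (o : ι)
    (M : Matrix ι ι ℝ)
    (hM_nonneg : ∀ i k, 0 ≤ M i k)
    (lam : ℝ) (hlam0 : 0 ≤ lam) (hlam1 : lam < 1)
    (hM_row : ∀ i, ∑ k, M i k ≤ lam)
    (D : Matrix ι ι ℝ)
    (hD' : D = ∑' t : ℕ, M ^ t)
    (i k : ι)
    (g : ℕ × ℕ → ℝ)
    (hg : ∀ t t' : ℕ, g (t, t') =
      if t ≤ t' then (M ^ t) o i * (M ^ (t' - t)) i k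
      else (M ^ t') o k * (M ^ (t - t')) k i) :
    Summable g ∧
    ∑' p : ℕ × ℕ, g p =
      D o i * D i k + D o k * D k i - D o i * (if i = k then 1 else 0) := by
  have hsum := Matrix.summable_pow_apply hM_nonneg hlam0 hlam1 hM_row
  have hnonneg := Matrix.pow_apply_nonneg hM_nonneg
  have hDapply : ∀ x y, HasSum (fun t => (M ^ t) x y) (D x y) := fun x y => by
    rw [hD', Matrix.tsum_apply hsum]
    exact (hsum x y).hasSum
  have hupper : HasSum (fun p : ℕ × ℕ => g (p.1, p.1 + p.2)) (D o i * D i k) := by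
    convert (hDapply o i).mul_of_nonneg (hDapply i k) (hnonneg · o i) (hnonneg · i k) using 2
    simp [hg]
  have hshift : HasSum (fun s => (M ^ (s + 1)) k i) (D k i - if i = k then 1 else 0) := by
    simpa [Matrix.one_apply, eq_comm] using (hasSum_nat_add_iff' 1).2 (hDapply k i)
  have hlower : HasSum (fun p : ℕ × ℕ => g (p.1 + p.2 + 1, p.1))
      (D o k * (D k i - if i = k then 1 else 0)) := by
    convert (hDapply o k).mul_of_nonneg hshift (hnonneg · o k) (fun s => hnonneg (s + 1) k i)
      using 2
    rw [hg, if_neg (by omega), show ∀ t s : ℕ, t + s + 1 - t = s + 1 by omega]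
  have htotal := hupper.of_upper_of_lower hlower
  refine ⟨htotal.summable, htotal.tsum_eq.trans ?_⟩
  split_ifs with hik
  · subst hik
    ring
  · ring

/-- Second moment of visit counts through the successor representation: for a
substochastic matrix `M` started at state `o`, the joint occupation probabilities
`g (t, t')` are summable and their total sum equals
`D_{o i} * D_{i k} + D_{o k} * D_{k i} - D_{o i} * δ_{i k}` where `D = (1 - M)⁻¹`. -/
theorem stmt_8 {ι : Type*} [Fintype ι] [DecidableEq ι]
    (o : ι)
    (M : Matrix ι ι ℝ)
    (hM_nonneg : ∀ i k, 0 ≤ M i k)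
    (lam : ℝ) (hlam0 : 0 ≤ lam) (hlam1 : lam < 1)
    (hM_row : ∀ i, ∑ k, M i k ≤ lam)
    (D : Matrix ι ι ℝ) (hD : D = (1 - M)⁻¹)
    (hD' : D = ∑' t : ℕ, M ^ t)
    (i k : ι)
    (g : ℕ × ℕ → ℝ)
    (hg : ∀ t t' : ℕ, g (t, t') =
      if t ≤ t' then (M ^ t) o i * (M ^ (t' - t)) i k
      else (M ^ t') o k * (M ^ (t - t')) k i) :
    Summable g ∧
    ∑' p : ℕ × ℕ, g p =
      D o i * D i k + D o k * D k i - D o i * (if i = k then 1 else 0) :=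
  stmt_8_general o M hM_nonneg lam hlam0 hlam1 hM_row D hD' i k g hg
end

section
/- Let S be a finite type of states with a distinguished start state 0 : S, and for each i : S let A i be a finite type of actions. Let π i j ≥ 0 with Σ_{j : A i} π i j = 1 for each i (a stochastic policy), and let p i j k ≥ 0 with Σ_{k : S} p i j k ≤ λ for every i, j, for some 0 ≤ λ < 1 (a substochastic environment dynamics with discount embedded). Define the induced state transition matrix T_{i k} := Σ_{j : A i} π i j · p i j k, the successor representation D := (1 − T)⁻¹, and E_{(i j) k} := Σ_{k' : S} p i j k' · D_{k' k}. Fix i, k : S, j : A i, l : A k and define g : ℕ × ℕ → ℝ by: g(t, t) := (T^t)_{0 i} · π i j if i = k and j = l, and 0 otherwise; for t < t', g(t, t') := (T^t)_{0 i} · π i j · (Σ_{k' : S} p i j k' · (T^{t'−t−1})_{k' k}) · π k l; and for t' < t, g(t, t') := (T^{t'})_{0 k} · π k l · (Σ_{k' : S} p k l k' · (T^{t−t'−1})_{k' i}) · π i j. Then g is summable over ℕ × ℕ and Σ_{(t,t')} g(t, t') = D_{0 i} · π i j · (if i = k ∧ j = l then 1 else 0) + (D_{0 i} · E_{(i j)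 k} + D_{0 k} · E_{(k l) i}) · π i j · π k l. -/
/-!
As `T` is entrywise nonnegative with row sums at most `lam < 1`, we have `(T ^ t) a b ≤ lam ^ t`,
so the Neumann series `∑ₜ T ^ t` converges entrywise, to `D = (1 - T)⁻¹`. The diagonal `t = t'`
then contributes `D o i * π i j` when `(i, j) = (k, l)`. Substituting `t' = t + d + 1`, the part
`t < t'` becomes the product of the absolutely convergent series `∑ₜ (T ^ t) o i * π i j` and
`∑_d (∑ k', p i j k' * (T ^ d) k' k) * π k l`, i.e. `D o i * π i j * E i j k * π k l`; the part
`t' < t` is symmetric.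
-/

theorem hasSum_ite_eq_diag {α M : Type*} [DecidableEq α] [AddCommMonoid M] [TopologicalSpace M]
    {f : α → M} {s : M} (hf : HasSum f s) :
    HasSum (fun q : α × α => if q.1 = q.2 then f q.1 else 0) s := by
  have hinj : Function.Injective fun t : α => (t, t) := fun _ _ h => congrArg Prod.fst h
  refine (hinj.hasSum_iff ?_).mp ?_
  · rintro ⟨t, t'⟩ hq
    have : t ≠ t' := fun h => hq ⟨t, by simp [h]⟩
    simp [this]
  · convert hf using 1
    funext t
    simp

theorem hasSum_ite_lt_mul {a b : ℕ → ℝ} {A B : ℝ} (ha : HasSum a A) (hb : HasSum b B) :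
    HasSum (fun q : ℕ × ℕ => if q.1 < q.2 then a q.1 * b (q.2 - q.1 - 1) else 0) (A * B) := by
  have hprod : HasSum (fun q : ℕ × ℕ => a q.1 * b q.2) (A * B) :=
    ha.mul hb (summable_mul_of_summable_norm (summable_norm_iff.mpr ha.summable)
      (summable_norm_iff.mpr hb.summable))
  have hinj : Function.Injective fun q : ℕ × ℕ => (q.1, q.1 + q.2 + 1) := by
    rintro ⟨t, d⟩ ⟨t', d'⟩ h
    simp only [Prod.mk.injEq] at h
    ext <;> omega
  refine (hinj.hasSum_iff ?_).mp ?_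
  · rintro ⟨t, t'⟩ hq
    have : ¬ t < t' := fun h => hq ⟨(t, t' - t - 1), by dsimp only; rw [Prod.mk.injEq]; omega⟩
    simp [this]
  · convert hprod using 2 with q
    simp [show q.1 + q.2 + 1 - q.1 - 1 = q.2 by omega]

theorem hasSum_ite_gt_mul {a b : ℕ → ℝ} {A B : ℝ} (ha : HasSum a A) (hb : HasSum b B) :
    HasSum (fun q : ℕ × ℕ => if q.2 < q.1 then a q.2 * b (q.1 - q.2 - 1) else 0) (A * B) :=
  (Equiv.prodComm ℕ ℕ).hasSum_iff
    (f := fun q : ℕ × ℕ => if q.1 < q.2 then a q.1 * b (q.2 - q.1 - 1) else 0)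
    |>.mpr (hasSum_ite_lt_mul ha hb)

theorem sum_sum_mul_le_of_sum_le {ι κ R : Type*} [Fintype ι] [Fintype κ] [Semiring R]
    [PartialOrder R] [IsOrderedRing R] {w : ι → R} {p : ι → κ → R} {r : R} (hw0 : ∀ j, 0 ≤ w j)
    (hw1 : ∑ j, w j = 1) (hp : ∀ j, ∑ k, p j k ≤ r) : ∑ k, ∑ j, w j * p j k ≤ r :=
  calc ∑ k, ∑ j, w j * p j k = ∑ j, w j * ∑ k, p j k := by
        rw [Finset.sum_comm]; simp_rw [Finset.mul_sum]
    _ ≤ ∑ j, w j * r := by gcongr with j; exacts [hw0 j, hp j]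
    _ = r := by rw [← Finset.sum_mul, hw1, one_mul]

namespace Matrix

variable {n : Type*} [Fintype n] [DecidableEq n]

section OrderedSemiring

variable {α : Type*} [Semiring α] [PartialOrder α] [IsOrderedRing α] {A : Matrix n n α} {r : α}

theorem sum_pow_apply_le_s9 (hA : ∀ a b, 0 ≤ A a b) (hrow : ∀ a, ∑ b, A a b ≤ r) (hr : 0 ≤ r)
    (t : ℕ) (a : n) : ∑ b, (A ^ t) a b ≤ r ^ t := by
  induction t generalizing a with
  | zero => simp [one_apply]
  | succ t ih =>
    calc ∑ b, (A ^ (t + 1)) a b = ∑ c, A a c * ∑ b, (A ^ t) c b := by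
          simp_rw [pow_succ', mul_apply, Finset.mul_sum]; rw [Finset.sum_comm]
      _ ≤ ∑ c, A a c * r ^ t := by gcongr with c; exacts [hA a c, ih c]
      _ ≤ r * r ^ t := by rw [← Finset.sum_mul]; gcongr; exact hrow a
      _ = r ^ (t + 1) := (pow_succ' r t).symm

theorem pow_apply_le_s9 (hA : ∀ a b, 0 ≤ A a b) (hrow : ∀ a, ∑ b, A a b ≤ r) (hr : 0 ≤ r)
    (t : ℕ) (a b : n) : (A ^ t) a b ≤ r ^ t :=
  (Finset.single_le_sum (fun c _ => pow_apply_nonneg hA t a c) (Finset.mem_univ b)).trans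
    (sum_pow_apply_le_s9 hA hrow hr t a)

end OrderedSemiring

theorem hasSum_pow_apply_inv_one_sub {A : Matrix n n ℝ} {r : ℝ} (hA : ∀ a b, 0 ≤ A a b)
    (hrow : ∀ a, ∑ b, A a b ≤ r) (hr0 : 0 ≤ r) (hr1 : r < 1) (a b : n) :
    HasSum (fun t : ℕ => (A ^ t) a b) ((1 - A)⁻¹ a b) := by
  have hsum : Summable fun t : ℕ => A ^ t :=
    Pi.summable.mpr fun a => Pi.summable.mpr fun b =>
      (summable_geometric_of_lt_one hr0 hr1).of_nonneg_of_le
        (fun t => pow_apply_nonneg hA t a b) (fun t => pow_apply_le_s9 hA hrow hr0 t a b)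
  rw [inv_eq_right_inv hsum.one_sub_mul_tsum_pow]
  exact Pi.hasSum.mp (Pi.hasSum.mp hsum.hasSum a) b

end Matrix

/-- Closed form of the state-action counter correlations used in the HIMO algorithm:
`C_{ij,kl} = D_{0i} π_{ij} δ_{ik} δ_{jl} + [D_{0i} E_{(ij)k} + D_{0k} E_{(kl)i}] π_{ij} π_{kl}`
where `D = (1 - T)⁻¹` is the successor representation of the induced state chain
`T i k = ∑ j, π i j * p i j k` and `E_{(ij)k} = ∑ k', p i j k' * D_{k' k}`. -/
theorem stmt_9 {S : Type*} [Fintype S] [DecidableEq S]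
    {A : S → Type*} [∀ i, Fintype (A i)] [∀ i, DecidableEq (A i)]
    (o : S)
    (π : ∀ i, A i → ℝ)
    (hπ_nonneg : ∀ (i : S) (j : A i), 0 ≤ π i j)
    (hπ_sum : ∀ i : S, ∑ j, π i j = 1)
    (p : ∀ i, A i → S → ℝ)
    (hp_nonneg : ∀ (i : S) (j : A i) (k : S), 0 ≤ p i j k)
    (lam : ℝ) (hlam0 : 0 ≤ lam) (hlam1 : lam < 1)
    (hp_sum : ∀ (i : S) (j : A i), ∑ k, p i j k ≤ lam)
    (T : Matrix S S ℝ)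
    (hT : ∀ i k : S, T i k = ∑ j, π i j * p i j k)
    (D : Matrix S S ℝ) (hD : D = (1 - T)⁻¹)
    (E : ∀ i, A i → S → ℝ)
    (hE : ∀ (i : S) (j : A i) (k : S), E i j k = ∑ k', p i j k' * D k' k)
    (i : S) (j : A i) (k : S) (l : A k)
    (g : ℕ × ℕ → ℝ)
    (hg : ∀ t t' : ℕ, g (t, t') =
      if t = t' then
        (if (⟨i, j⟩ : Σ s, A s) = ⟨k, l⟩ then (T ^ t) o i * π i j else 0)
      else if t < t' then
        (T ^ t) o i * π i j * (∑ k', p i j k' * (T ^ (t' - t - 1)) k' k) * π k l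
      else
        (T ^ t') o k * π k l * (∑ k', p k l k' * (T ^ (t - t' - 1)) k' i) * π i j) :
    Summable g ∧
    ∑' q : ℕ × ℕ, g q =
      D o i * π i j * (if (⟨i, j⟩ : Σ s, A s) = ⟨k, l⟩ then 1 else 0) +
      (D o i * E i j k + D o k * E k l i) * π i j * π k l := by
  have hT0 : ∀ a b, 0 ≤ T a b := fun a b => by
    rw [hT]; exact Finset.sum_nonneg fun j _ => mul_nonneg (hπ_nonneg a j) (hp_nonneg a j b)
  have hrow : ∀ a, ∑ b, T a b ≤ lam := fun a => by
    simp_rw [hT]; exact sum_sum_mul_le_of_sum_le (hπ_nonneg a) (hπ_sum a) (hp_sum a)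
  have hD_series : ∀ a b, HasSum (fun t : ℕ => (T ^ t) a b) (D a b) := by
    subst hD; exact Matrix.hasSum_pow_apply_inv_one_sub hT0 hrow hlam0 hlam1
  have hE_series : ∀ (a : S) (c : A a) (b : S),
      HasSum (fun d : ℕ => ∑ k', p a c k' * (T ^ d) k' b) (E a c b) := fun a c b => by
    rw [hE]; exact hasSum_sum fun k' _ => (hD_series k' b).mul_left _
  have hpieces := ((hasSum_ite_eq_diag ((hD_series o i).mul_right
      (π i j * if (⟨i, j⟩ : Σ s, A s) = ⟨k, l⟩ then 1 else 0))).add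
    (hasSum_ite_lt_mul ((hD_series o i).mul_right (π i j)) ((hE_series i j k).mul_right (π k l)))).add
    (hasSum_ite_gt_mul ((hD_series o k).mul_right (π k l)) ((hE_series k l i).mul_right (π i j)))
  have hG := hpieces.congr_fun (g := g) fun ⟨t, t'⟩ => by
    rw [hg]
    rcases lt_trichotomy t t' with h | rfl | h
    · simp only [h, h.ne, h.not_gt, if_true, if_false, zero_add]
      ring
    · simp only [lt_irrefl, if_true, if_false, add_zero]
      split_ifs <;> ring
    · simp only [h, h.ne', h.not_gt, if_true, if_false, zero_add]
      ring
  exact ⟨hG.summable, hG.tsum_eq.trans (by ring)⟩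
end
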